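/- (Main Proposition) The function f* : [0,1]² → [0,1] defined by f*(x,y) = f(x,y) if (x,y) ∈ ⋃_{n∈ℕ} A_n, and f*(x,y) = x otherwise, is a bijection from [0,1]² to [0,1]. -/

import Mathlib

/-!
Write `x ∈ [0,1)` by its proper decimal expansion and `1` as `0.999…`. Then `f(x,y)` is the
number whose digits interleave the expansions of `x` and `y`. The interleaved sequence is proper
unless `x = y = 1`, a proper sequence is recovered from its value digit by digit (via
`d_{k+1}(z) = ⌊10 · fract(10^k z)⌋`), and its value is `< 1 = 0.999…`; so `f` is injective on
`[0,1]²`. As `g(t) = (t,0)` is injective with left inverse `(x,y) ↦ x`, the Schröder–Bernstein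
construction (`f` on `⋃ Aₙ`, `g⁻¹` elsewhere) is a bijection `[0,1]² → [0,1]`.
-/

open Set

/-- The `k`-th digit of the proper decimal expansion of `x`
(meaningful for `x ∈ [0,1)` and `k ≥ 1`): `d_k(x) = ⌊10^k x⌋ - 10⌊10^{k-1} x⌋`. -/
noncomputable def digit (k : ℕ) (x : ℝ) : ℤ :=
  ⌊(10 : ℝ) ^ k * x⌋ - 10 * ⌊(10 : ℝ) ^ (k - 1) * x⌋

/-- Cantor's interleaving map
`C(x,y) = ∑_{k≥1} d_k(x)/10^{2k-1} + ∑_{k≥1} d_k(y)/10^{2k}`. -/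
noncomputable def cantorC (x y : ℝ) : ℝ :=
  (∑' k : ℕ, (digit (k + 1) x : ℝ) / 10 ^ (2 * (k + 1) - 1)) +
    ∑' k : ℕ, (digit (k + 1) y : ℝ) / 10 ^ (2 * (k + 1))

/-- The extension `f : [0,1]² → [0,1]` of Cantor's interleaving map:
`f(x,y) = C(x,y)` for `x, y ∈ [0,1)`; `f(1,y) = 0.9y₁9y₂9y₃⋯` for `y ∈ [0,1)`;
`f(x,1) = 0.x₁9x₂9x₃9⋯` for `x ∈ [0,1)`; and `f(1,1) = 1`. -/
noncomputable def cantorF (x y : ℝ) : ℝ :=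
  if x < 1 ∧ y < 1 then cantorC x y
  else if x = 1 ∧ y < 1 then
    (∑' k : ℕ, (9 : ℝ) / 10 ^ (2 * (k + 1) - 1)) +
      ∑' k : ℕ, (digit (k + 1) y : ℝ) / 10 ^ (2 * (k + 1))
  else if x < 1 ∧ y = 1 then
    (∑' k : ℕ, (digit (k + 1) x : ℝ) / 10 ^ (2 * (k + 1) - 1)) +
      ∑' k : ℕ, (9 : ℝ) / 10 ^ (2 * (k + 1))
  else 1

/-- The Schröder–Bernstein sequence of subsets of `[0,1]²` for the injections
`f` and `g(t) = (t,0)`: `A₀ = [0,1]² \ g([0,1])` and `A_{n+1} = g(f(A_n))`. -/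
noncomputable def SBA : ℕ → Set (ℝ × ℝ)
  | 0 => (Icc 0 1 ×ˢ Icc 0 1) \ ((fun t : ℝ => (t, (0 : ℝ))) '' Icc 0 1)
  | n + 1 => (fun t : ℝ => (t, (0 : ℝ))) '' ((fun p : ℝ × ℝ => cantorF p.1 p.2) '' SBA n)

/-- The corresponding sequence of subsets of `[0,1]`: `B_n = f(A_n)`. -/
noncomputable def SBB (n : ℕ) : Set ℝ := (fun p : ℝ × ℝ => cantorF p.1 p.2) '' SBA n

open Classical in
/-- The bijection `f* : [0,1]² → [0,1]`: `f*(x,y) = f(x,y)` if `(x,y) ∈ ⋃ n, A_n`,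
and `f*(x,y) = x` otherwise. -/
noncomputable def fstar (p : ℝ × ℝ) : ℝ :=
  if p ∈ ⋃ n, SBA n then cantorF p.1 p.2 else p.1

open Filter

namespace SchroederBernstein

variable {α β : Type*} (f : α → β) (g : β → α) (S : Set α) (T : Set β)

def seq : ℕ → Set α
  | 0 => S \ g '' T
  | n + 1 => g '' (f '' seq n)

variable {f g S T}

theorem seq_subset (hf : MapsTo f S T) (hg : MapsTo g T S) : ∀ n, seq f g S T n ⊆ S
  | 0 => sdiff_subset
  | n + 1 => by
    rintro _ ⟨_, ⟨p, hp, rfl⟩, rfl⟩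
    exact hg (hf (seq_subset hf hg n hp))

theorem mem_image_of_notMem_iUnion_seq {p : α} (hp : p ∈ S) (hpA : p ∉ ⋃ n, seq f g S T n) :
    p ∈ g '' T :=
  by_contra fun h ↦ hpA (mem_iUnion_of_mem 0 ⟨hp, h⟩)

theorem apply_apply_mem_iUnion_seq {p : α} (hp : p ∈ ⋃ n, seq f g S T n) :
    g (f p) ∈ ⋃ n, seq f g S T n := by
  obtain ⟨n, hn⟩ := mem_iUnion.1 hp
  exact mem_iUnion_of_mem (n + 1) (mem_image_of_mem g (mem_image_of_mem f hn))

variable {h : α → β} [∀ p, Decidable (p ∈ ⋃ n, seq f g S T n)]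

theorem mapsTo_piecewise (hf : MapsTo f S T) (hgh : LeftInvOn h g T) :
    MapsTo ((⋃ n, seq f g S T n).piecewise f h) S T := by
  intro p hp
  by_cases hpA : p ∈ ⋃ n, seq f g S T n
  · rw [piecewise_eq_of_mem _ _ _ hpA]
    exact hf hp
  · obtain ⟨t, ht, rfl⟩ := mem_image_of_notMem_iUnion_seq hp hpA
    rw [piecewise_eq_of_notMem _ _ _ hpA, hgh ht]
    exact ht

theorem injOn_piecewise (hf : InjOn f S) (hgh : LeftInvOn h g T) :
    InjOn ((⋃ n, seq f g S T n).piecewise f h) S := by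
  have mixed {p q : α} (hpA : p ∈ ⋃ n, seq f g S T n) (hq : q ∈ S)
      (hqA : q ∉ ⋃ n, seq f g S T n)
      (hpq : (⋃ n, seq f g S T n).piecewise f h p = (⋃ n, seq f g S T n).piecewise f h q) :
      False := by
    obtain ⟨t, ht, rfl⟩ := mem_image_of_notMem_iUnion_seq hq hqA
    rw [piecewise_eq_of_mem _ _ _ hpA, piecewise_eq_of_notMem _ _ _ hqA, hgh ht] at hpq
    exact hqA (hpq ▸ apply_apply_mem_iUnion_seq hpA)
  intro p hp q hq hpq
  by_cases hpA : p ∈ ⋃ n, seq f g S T n <;> by_cases hqA : q ∈ ⋃ n, seq f g S T n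
  · rw [piecewise_eq_of_mem _ _ _ hpA, piecewise_eq_of_mem _ _ _ hqA] at hpq
    exact hf hp hq hpq
  · exact (mixed hpA hq hqA hpq).elim
  · exact (mixed hqA hp hpA hpq.symm).elim
  · obtain ⟨t, ht, rfl⟩ := mem_image_of_notMem_iUnion_seq hp hpA
    obtain ⟨t', ht', rfl⟩ := mem_image_of_notMem_iUnion_seq hq hqA
    rw [piecewise_eq_of_notMem _ _ _ hpA, piecewise_eq_of_notMem _ _ _ hqA, hgh ht,
      hgh ht'] at hpq
    rw [hpq]

theorem surjOn_piecewise (hf : MapsTo f S T) (hg : MapsTo g T S) (hgh : LeftInvOn h g T) :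
    SurjOn ((⋃ n, seq f g S T n).piecewise f h) S T := by
  intro z hz
  by_cases hzB : ∃ n, z ∈ f '' seq f g S T n
  · obtain ⟨n, p, hp, rfl⟩ := hzB
    have hpA : p ∈ ⋃ n, seq f g S T n := mem_iUnion_of_mem n hp
    exact ⟨p, seq_subset hf hg n hp, piecewise_eq_of_mem _ _ _ hpA⟩
  · have hgzA : g z ∉ ⋃ n, seq f g S T n := by
      simp only [mem_iUnion, not_exists]
      rintro (_ | n) hn
      · exact hn.2 (mem_image_of_mem g hz)
      · obtain ⟨w, hw, hwz⟩ := hn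
        have hwT : w ∈ T := image_subset_iff.2 (hf.mono_left (seq_subset hf hg n)) hw
        exact hzB ⟨n, hgh.injOn hwT hz hwz ▸ hw⟩
    exact ⟨g z, hg hz, by rw [piecewise_eq_of_notMem _ _ _ hgzA, hgh hz]⟩

theorem bijOn_piecewise (hf : MapsTo f S T) (hf' : InjOn f S) (hg : MapsTo g T S)
    (hgh : LeftInvOn h g T) : BijOn ((⋃ n, seq f g S T n).piecewise f h) S T :=
  ⟨mapsTo_piecewise hf hgh, injOn_piecewise hf' hgh, surjOn_piecewise hf hg hgh⟩

end SchroederBernstein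

theorem fract_ten_pow_mul_fract (k : ℕ) (x : ℝ) :
    Int.fract ((10 : ℝ) ^ k * Int.fract x) = Int.fract (10 ^ k * x) := by
  have : (10 : ℝ) ^ k * Int.fract x = 10 ^ k * x - ((10 ^ k * ⌊x⌋ : ℤ) : ℝ) := by
    rw [Int.fract]; push_cast; ring
  rw [this, Int.fract_sub_intCast]

theorem digit_succ_eq_floor_fract (k : ℕ) (x : ℝ) :
    digit (k + 1) x = ⌊10 * Int.fract (10 ^ k * x)⌋ := by
  rw [digit, Int.fract, mul_sub, Nat.add_sub_cancel, pow_succ', mul_assoc]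
  exact_mod_cast (Int.floor_sub_intCast _ _).symm

theorem digit_succ_mem_Icc (k : ℕ) (x : ℝ) : digit (k + 1) x ∈ Icc 0 9 := by
  rw [digit_succ_eq_floor_fract]
  refine ⟨Int.floor_nonneg.2 (by positivity), ?_⟩
  rw [← Int.lt_add_one_iff, Int.floor_lt]
  have := Int.fract_lt_one (10 ^ k * x)
  push_cast
  linarith

theorem digit_succ_fract_ten_pow_mul (k n : ℕ) (x : ℝ) :
    digit (k + 1) (Int.fract (10 ^ n * x)) = digit (k + n + 1) x := by
  rw [digit_succ_eq_floor_fract, digit_succ_eq_floor_fract, fract_ten_pow_mul_fract, ← mul_assoc,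
    ← pow_add]

theorem sum_range_digit (n : ℕ) (x : ℝ) :
    ∑ k ∈ Finset.range n, (digit (k + 1) x : ℝ) / 10 ^ (k + 1) =
      ⌊10 ^ n * x⌋ / 10 ^ n - ⌊x⌋ := by
  have h := Finset.sum_range_sub (fun n ↦ (⌊(10 : ℝ) ^ n * x⌋ : ℝ) / 10 ^ n) n
  simp only [pow_zero, one_mul, div_one] at h
  rw [← h]
  refine Finset.sum_congr rfl fun k _ ↦ ?_
  rw [digit, Nat.add_sub_cancel, pow_succ]
  push_cast
  field_simp

noncomputable def decimalValue (c : ℕ → ℤ) : ℝ := ∑' k, (c k : ℝ) / 10 ^ (k + 1)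

structure IsProperExpansion (c : ℕ → ℤ) : Prop where
  mem_Icc : ∀ k, c k ∈ Icc 0 9
  frequently_lt_nine : ∃ᶠ k in atTop, c k < 9

section DecimalValue

variable {c : ℕ → ℤ}

theorem summable_decimalValue (hc : ∀ k, c k ∈ Icc 0 9) :
    Summable fun k ↦ (c k : ℝ) / 10 ^ (k + 1) := by
  refine .of_nonneg_of_le (fun k ↦ ?_) (fun k ↦ ?_)
    ((summable_geometric_of_lt_one (r := (10 : ℝ)⁻¹) (by norm_num) (by norm_num)).mul_left 9)
  · have := (hc k).1
    positivity
  · calc (c k : ℝ) / 10 ^ (k + 1) ≤ 9 / 10 ^ (k + 1) := by gcongr; exact_mod_cast (hc k).2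
      _ ≤ 9 * 10⁻¹ ^ k := by
        rw [inv_pow, ← div_eq_mul_inv]
        gcongr <;> norm_num

theorem decimalValue_const_nine : decimalValue (fun _ ↦ 9) = 1 := by
  have h (k : ℕ) : ((9 : ℤ) : ℝ) / 10 ^ (k + 1) = 9 / 10 * (10 : ℝ)⁻¹ ^ k := by
    rw [inv_pow, pow_succ]; push_cast; field_simp
  rw [decimalValue, tsum_congr h, tsum_mul_left,
    tsum_geometric_of_lt_one (by norm_num) (by norm_num)]
  norm_num

theorem decimalValue_mem_Icc (hc : ∀ k, c k ∈ Icc 0 9) : decimalValue c ∈ Icc 0 1 := by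
  refine ⟨tsum_nonneg fun k ↦ ?_, decimalValue_const_nine ▸ ?_⟩
  · have := (hc k).1
    positivity
  · refine (summable_decimalValue hc).tsum_le_tsum (fun k ↦ ?_)
      (summable_decimalValue fun _ ↦ ⟨by norm_num, le_rfl⟩)
    gcongr
    exact_mod_cast (hc k).2

theorem IsProperExpansion.decimalValue_mem_Ico (hc : IsProperExpansion c) :
    decimalValue c ∈ Ico 0 1 := by
  obtain ⟨i, hi⟩ := hc.frequently_lt_nine.exists
  refine ⟨(decimalValue_mem_Icc hc.mem_Icc).1, decimalValue_const_nine ▸ ?_⟩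
  refine (summable_decimalValue hc.mem_Icc).tsum_lt_tsum (i := i) (fun k ↦ ?_) ?_
    (summable_decimalValue fun _ ↦ ⟨by norm_num, le_rfl⟩)
  · dsimp only
    gcongr
    exact_mod_cast (hc.mem_Icc k).2
  · dsimp only
    gcongr

theorem IsProperExpansion.shift (hc : IsProperExpansion c) (n : ℕ) :
    IsProperExpansion fun k ↦ c (k + n) := by
  refine ⟨fun k ↦ hc.mem_Icc (k + n), ?_⟩
  rw [← frequently_map (P := (c · < 9)), map_add_atTop_eq_nat]
  exact hc.frequently_lt_nine

theorem ten_mul_decimalValue (hc : ∀ k, c k ∈ Icc 0 9) :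
    10 * decimalValue c = c 0 + decimalValue fun k ↦ c (k + 1) := by
  rw [decimalValue, (summable_decimalValue hc).tsum_eq_zero_add, mul_add, decimalValue,
    ← tsum_mul_left]
  congr 1
  · simp only [zero_add, pow_one]
    field_simp
  · refine tsum_congr fun k ↦ ?_
    rw [pow_succ _ (k + 1)]
    field_simp

theorem IsProperExpansion.floor_ten_mul_decimalValue (hc : IsProperExpansion c) :
    ⌊10 * decimalValue c⌋ = c 0 := by
  rw [ten_mul_decimalValue hc.mem_Icc, Int.floor_intCast_add,
    Int.floor_eq_zero_iff.2 (hc.shift 1).decimalValue_mem_Ico, add_zero]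

theorem IsProperExpansion.fract_ten_mul_decimalValue (hc : IsProperExpansion c) :
    Int.fract (10 * decimalValue c) = decimalValue fun k ↦ c (k + 1) := by
  rw [ten_mul_decimalValue hc.mem_Icc, Int.fract_intCast_add,
    Int.fract_eq_self.2 (hc.shift 1).decimalValue_mem_Ico]

theorem IsProperExpansion.fract_ten_pow_mul_decimalValue (hc : IsProperExpansion c) (n : ℕ) :
    Int.fract (10 ^ n * decimalValue c) = decimalValue fun k ↦ c (k + n) := by
  induction n with
  | zero => simpa using Int.fract_eq_self.2 hc.decimalValue_mem_Ico
  | succ n ih =>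
    rw [pow_succ', mul_assoc, ← pow_one (10 : ℝ), ← fract_ten_pow_mul_fract, pow_one, ih,
      (hc.shift n).fract_ten_mul_decimalValue]
    simp only [add_comm 1 n, add_assoc]

theorem IsProperExpansion.digit_decimalValue (hc : IsProperExpansion c) (k : ℕ) :
    digit (k + 1) (decimalValue c) = c k := by
  rw [digit_succ_eq_floor_fract, hc.fract_ten_pow_mul_decimalValue,
    (hc.shift k).floor_ten_mul_decimalValue, zero_add]

end DecimalValue

theorem injOn_decimalValue :
    InjOn decimalValue (insert (fun _ ↦ 9) {c | IsProperExpansion c}) := by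
  have key {c c' : ℕ → ℤ} (hc : IsProperExpansion c)
      (hc' : c' ∈ insert (fun _ ↦ 9) {c | IsProperExpansion c})
      (h : decimalValue c = decimalValue c') : c = c' := by
    rcases hc' with rfl | hc'
    · exact absurd (h.trans decimalValue_const_nine) hc.decimalValue_mem_Ico.2.ne
    · exact funext fun k ↦ by rw [← hc.digit_decimalValue k, ← hc'.digit_decimalValue k, h]
  rintro c (rfl | hc) c' hc' h
  · rcases hc' with rfl | hc'
    · rfl
    · exact (key hc' (mem_insert _ _) h.symm).symm
  · exact key hc hc' h

theorem hasSum_digit {x : ℝ} (hx : x ∈ Ico 0 1) :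
    HasSum (fun k ↦ (digit (k + 1) x : ℝ) / 10 ^ (k + 1)) x := by
  rw [(summable_decimalValue (digit_succ_mem_Icc · x)).hasSum_iff_tendsto_nat]
  simp_rw [sum_range_digit, Int.floor_eq_zero_iff.2 hx, Int.cast_zero, sub_zero]
  have hlim := (tendsto_nat_floor_mul_div_atTop hx.1).comp
    (tendsto_pow_atTop_atTop_of_one_lt (by norm_num : (1 : ℝ) < 10))
  refine hlim.congr fun n ↦ ?_
  simp only [Function.comp_apply, mul_comm x]
  rw [natCast_floor_eq_intCast_floor (mul_nonneg (by positivity) hx.1)]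

theorem frequently_digit_lt_nine (x : ℝ) :
    ∃ᶠ k in atTop, digit (k + 1) x < 9 := by
  -- otherwise `fract (10 ^ n * x)` would be `0.999… = 1` for some `n`
  by_contra h
  obtain ⟨n, hn⟩ := eventually_atTop.1 (not_frequently.1 h)
  have hy : Int.fract (10 ^ n * x) ∈ Ico 0 1 := ⟨Int.fract_nonneg _, Int.fract_lt_one _⟩
  have hnine (k : ℕ) : digit (k + 1) (Int.fract (10 ^ n * x)) = 9 := by
    rw [digit_succ_fract_ten_pow_mul]
    exact le_antisymm (digit_succ_mem_Icc _ x).2 (not_lt.1 (hn _ (by omega)))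
  have hsum := (hasSum_digit hy).tsum_eq
  simp only [hnine] at hsum
  exact hy.2.ne (hsum.symm.trans decimalValue_const_nine)

noncomputable def expansion (x : ℝ) : ℕ → ℤ :=
  if x < 1 then fun k ↦ digit (k + 1) x else fun _ ↦ 9

theorem expansion_mem_Icc (x : ℝ) (k : ℕ) : expansion x k ∈ Icc 0 9 := by
  unfold expansion
  split_ifs
  · exact digit_succ_mem_Icc k x
  · exact ⟨by norm_num, le_rfl⟩

theorem isProperExpansion_expansion {x : ℝ} (hx : x < 1) : IsProperExpansion (expansion x) := by
  rw [expansion, if_pos hx]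
  exact ⟨(digit_succ_mem_Icc · x), frequently_digit_lt_nine x⟩

theorem decimalValue_expansion {x : ℝ} (hx : x ∈ Icc 0 1) : decimalValue (expansion x) = x := by
  rcases hx.2.lt_or_eq with hx1 | rfl
  · rw [expansion, if_pos hx1]
    exact (hasSum_digit ⟨hx.1, hx1⟩).tsum_eq
  · rw [expansion, if_neg (lt_irrefl 1)]
    exact decimalValue_const_nine

theorem injOn_expansion : InjOn expansion (Icc 0 1) :=
  LeftInvOn.injOn fun _ ↦ decimalValue_expansion

def interleave (a b : ℕ → ℤ) (k : ℕ) : ℤ := if Even k then a (k / 2) else b (k / 2)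

section Interleave

variable {a b : ℕ → ℤ}

@[simp]
theorem interleave_two_mul (k : ℕ) : interleave a b (2 * k) = a k := by
  simp [interleave]

@[simp]
theorem interleave_two_mul_add_one (k : ℕ) : interleave a b (2 * k + 1) = b k := by
  simp [interleave, show (2 * k + 1) / 2 = k by omega]

theorem interleave_const (d : ℤ) : interleave (fun _ ↦ d) (fun _ ↦ d) = fun _ ↦ d :=
  funext fun k ↦ by simp [interleave]

theorem interleave_inj {a' b' : ℕ → ℤ} :
    interleave a b = interleave a' b' ↔ a = a' ∧ b = b' := by
  refine ⟨fun h ↦ ⟨funext fun k ↦ ?_, funext fun k ↦ ?_⟩, fun ⟨ha, hb⟩ ↦ ha ▸ hb ▸ rfl⟩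
  · simpa using congrFun h (2 * k)
  · simpa using congrFun h (2 * k + 1)

theorem interleave_mem_Icc (ha : ∀ k, a k ∈ Icc 0 9) (hb : ∀ k, b k ∈ Icc 0 9) (k : ℕ) :
    interleave a b k ∈ Icc 0 9 := by
  unfold interleave
  split_ifs
  exacts [ha _, hb _]

theorem IsProperExpansion.interleave_left (ha : IsProperExpansion a)
    (hb : ∀ k, b k ∈ Icc 0 9) : IsProperExpansion (interleave a b) :=
  ⟨interleave_mem_Icc ha.mem_Icc hb,
    (strictMono_mul_left_of_pos two_pos).tendsto_atTop.frequently
    (by simpa using ha.frequently_lt_nine)⟩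

theorem IsProperExpansion.interleave_right (ha : ∀ k, a k ∈ Icc 0 9)
    (hb : IsProperExpansion b) : IsProperExpansion (interleave a b) :=
  ⟨interleave_mem_Icc ha hb.mem_Icc,
    (strictMono_mul_left_of_pos two_pos).add_const 1 |>.tendsto_atTop.frequently
    (by simpa using hb.frequently_lt_nine)⟩

theorem decimalValue_interleave (ha : ∀ k, a k ∈ Icc 0 9) (hb : ∀ k, b k ∈ Icc 0 9) :
    decimalValue (interleave a b) = (∑' k, (a k : ℝ) / 10 ^ (2 * (k + 1) - 1)) +
      ∑' k, (b k : ℝ) / 10 ^ (2 * (k + 1)) := by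
  have hs := summable_decimalValue (interleave_mem_Icc ha hb)
  have he : Summable fun k ↦ (interleave a b (2 * k) : ℝ) / 10 ^ (2 * k + 1) :=
    hs.comp_injective (mul_right_injective₀ two_ne_zero)
  have ho : Summable fun k ↦ (interleave a b (2 * k + 1) : ℝ) / 10 ^ (2 * k + 1 + 1) :=
    hs.comp_injective ((add_left_injective 1).comp (mul_right_injective₀ two_ne_zero))
  rw [decimalValue,
    ← tsum_even_add_odd (f := fun k ↦ (interleave a b k : ℝ) / 10 ^ (k + 1)) he ho]
  congr 1 <;> refine tsum_congr fun k ↦ ?_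
  · rw [interleave_two_mul, show 2 * (k + 1) - 1 = 2 * k + 1 by omega]
  · rw [interleave_two_mul_add_one, show 2 * (k + 1) = 2 * k + 1 + 1 by omega]

end Interleave

theorem cantorF_eq_decimalValue_interleave {x y : ℝ} (hx : x ∈ Icc 0 1) (hy : y ∈ Icc 0 1) :
    cantorF x y = decimalValue (interleave (expansion x) (expansion y)) := by
  rcases hx.2.lt_or_eq with hx1 | rfl <;> rcases hy.2.lt_or_eq with hy1 | rfl
  · rw [decimalValue_interleave (expansion_mem_Icc x) (expansion_mem_Icc y)]
    simp [cantorF, cantorC, expansion, hx1, hy1]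
  · rw [decimalValue_interleave (expansion_mem_Icc x) (expansion_mem_Icc 1)]
    simp [cantorF, expansion, hx1]
  · rw [decimalValue_interleave (expansion_mem_Icc 1) (expansion_mem_Icc y)]
    simp [cantorF, expansion, hy1]
  · simp [cantorF, expansion, interleave_const, decimalValue_const_nine]

theorem interleave_expansion_mem {x y : ℝ} (hx : x ∈ Icc 0 1) (hy : y ∈ Icc 0 1) :
    interleave (expansion x) (expansion y) ∈ insert (fun _ ↦ 9) {c | IsProperExpansion c} := by
  rcases hx.2.lt_or_eq with hx1 | rfl
  · exact Or.inr ((isProperExpansion_expansion hx1).interleave_left (expansion_mem_Icc y))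
  rcases hy.2.lt_or_eq with hy1 | rfl
  · exact Or.inr (IsProperExpansion.interleave_right (expansion_mem_Icc 1)
      (isProperExpansion_expansion hy1))
  · left
    simp [expansion, interleave_const]

theorem cantorF_mapsTo :
    MapsTo (fun p : ℝ × ℝ ↦ cantorF p.1 p.2) (Icc 0 1 ×ˢ Icc 0 1) (Icc 0 1) := by
  rintro ⟨x, y⟩ ⟨hx, hy⟩
  simpa only [cantorF_eq_decimalValue_interleave hx hy] using
    decimalValue_mem_Icc (interleave_mem_Icc (expansion_mem_Icc x) (expansion_mem_Icc y))

theorem cantorF_injOn : InjOn (fun p : ℝ × ℝ ↦ cantorF p.1 p.2) (Icc 0 1 ×ˢ Icc 0 1) := by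
  rintro ⟨x, y⟩ ⟨hx, hy⟩ ⟨x', y'⟩ ⟨hx', hy'⟩ h
  simp only [cantorF_eq_decimalValue_interleave hx hy,
    cantorF_eq_decimalValue_interleave hx' hy'] at h
  obtain ⟨hxx', hyy'⟩ := interleave_inj.1 <| injOn_decimalValue
    (interleave_expansion_mem hx hy) (interleave_expansion_mem hx' hy') h
  exact Prod.ext (injOn_expansion hx hx' hxx') (injOn_expansion hy hy' hyy')

/-- **Main Proposition.** The function `f*` is a bijection from `[0,1]²` to `[0,1]`. -/
theorem fstar_bijOn : Set.BijOn fstar (Icc 0 1 ×ˢ Icc 0 1) (Icc (0 : ℝ) 1) := by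
  classical
  have hSBA : SBA = SchroederBernstein.seq (fun p : ℝ × ℝ ↦ cantorF p.1 p.2)
      (fun t ↦ (t, 0)) (Icc 0 1 ×ˢ Icc 0 1) (Icc 0 1) := by
    funext n
    induction n with
    | zero => rfl
    | succ n ih => simp only [SBA, SchroederBernstein.seq, ih]
  have hfstar : fstar = (⋃ n, SBA n).piecewise (fun p ↦ cantorF p.1 p.2) Prod.fst := by
    funext p
    simp only [fstar, piecewise]
  rw [hfstar, hSBA]
  exact SchroederBernstein.bijOn_piecewise cantorF_mapsTo cantorF_injOn
    (fun t ht ↦ ⟨ht, left_mem_Icc.2 zero_le_one⟩) fun _ _ ↦ rfl
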